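/- Let A = {0,4,5,6,7,9,13,16,20,22,23,24,25}, D = {0,1,2,3,5,8,10,13,14,15,18,22,25}, and B = {0,1,2,5,6,8,11,12,14,16,22} be subsets of ℤ/29ℤ, and let MA, MD, MB be the associated binary circulant matrices of order 29 (with entry −1 at (r,s) if s − r lies in the set, and +1 otherwise). Then MA is symmetric (MAᵀ = MA) and MA·MAᵀ + MD·MDᵀ + 2·(MB·MBᵀ) = 116·I; consequently plugging (A, B, C = B, D) into the GP array yields a symmetric Hadamard matrix of order 116. -/

import Mathlib

/-!
Let `R` be the back-diagonal permutation. Circulant matrices over `ℤ/vℤ` commute with each other,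
their transposes are circulant, and `R² = 1`, `R X = Xᵀ R` for every circulant `X`; in particular
each `X R` is symmetric. Every block of the GP array is `±X` or `±X R` with `X` circulant, so in
`GP · GPᵀ` the off-diagonal block products cancel in pairs while each diagonal block is
`A Aᵀ + B Bᵀ + C Cᵀ + D Dᵀ`; with `Aᵀ = A` and `B = C` the array is symmetric.

The Gram matrix of the `±1` circulant of `X` is the circulant of the periodic autocorrelation of
the sign sequence of `X`, so the identity `A Aᵀ + 2 B Bᵀ + D Dᵀ = 116 I` is a finite check on
the three autocorrelation functions.
-/

open Matrix

/-- The binary circulant matrix of order `v` associated to a subset `X ⊆ ℤ/vℤ`: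
the entry at `(r, s)` is `-1` if `s - r ∈ X` and `+1` otherwise. -/
def circOf {v : ℕ} (X : Finset (ZMod v)) : Matrix (ZMod v) (ZMod v) ℤ :=
  Matrix.of fun r s => if s - r ∈ X then -1 else 1

/-- The back-diagonal permutation matrix `R` of order `v`:
`R i j = 1` if `i + j = -1` in `ZMod v`, and `0` otherwise. -/
def backDiag (v : ℕ) : Matrix (ZMod v) (ZMod v) ℤ :=
  Matrix.of fun i j => if i + j = -1 then 1 else 0

/-- The GP array of Balonin and Seberry, built from four matrices of order `v`,
as a `4v × 4v` matrix indexed by `Fin 4 × ZMod v`. -/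
def GParray (v : ℕ) [NeZero v] (A B C D : Matrix (ZMod v) (ZMod v) ℤ) :
    Matrix (Fin 4 × ZMod v) (Fin 4 × ZMod v) ℤ :=
  Matrix.of fun p q =>
    (![![A, B * backDiag v, C * backDiag v, D * backDiag v],
       ![C * backDiag v, Dᵀ * backDiag v, -A, -(Bᵀ * backDiag v)],
       ![B * backDiag v, -A, -(Dᵀ * backDiag v), Cᵀ * backDiag v],
       ![D * backDiag v, -(Cᵀ * backDiag v), Bᵀ * backDiag v, -A]] p.1 q.1) p.2 q.2

def periodicAutocorrelation {G α : Type*} [Fintype G] [Add G] [NonUnitalNonAssocSemiring α]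
    (f : G → α) (k : G) : α :=
  ∑ i, f i * f (i + k)

namespace Matrix

variable {n α : Type*}

theorem circulant_mul_transpose_circulant [CommSemiring α] [Fintype n] [AddCommGroup n]
    (f : n → α) :
    circulant f * (circulant f)ᵀ = circulant (periodicAutocorrelation f) := by
  ext r s
  simp only [mul_apply, transpose_apply, circulant_apply, periodicAutocorrelation]
  refine Fintype.sum_equiv (Equiv.subLeft s) _ _ fun t => ?_
  simp only [Equiv.subLeft_apply, mul_comm (f (r - t))]
  congr 2
  abel

end Matrix

section BackDiag

variable {v : ℕ}

theorem mul_backDiag_apply [NeZero v] (M : Matrix (ZMod v) (ZMod v) ℤ) (r s : ZMod v) :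
    (M * backDiag v) r s = M r (-1 - s) := by
  simp [mul_apply, backDiag, ← eq_sub_iff_add_eq]

theorem backDiag_mul_apply [NeZero v] (M : Matrix (ZMod v) (ZMod v) ℤ) (r s : ZMod v) :
    (backDiag v * M) r s = M (-1 - r) s := by
  simp [mul_apply, backDiag, ← eq_sub_iff_add_eq']

@[simp]
theorem backDiag_transpose : (backDiag v)ᵀ = backDiag v := by
  ext r s
  simp [backDiag, add_comm]

@[simp]
theorem backDiag_mul_backDiag [NeZero v] : backDiag v * backDiag v = 1 := by
  ext r s
  rw [mul_backDiag_apply, one_apply]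
  simp only [backDiag, of_apply, add_sub_left_comm, add_eq_left, sub_eq_zero]

theorem backDiag_mul_circulant [NeZero v] (f : ZMod v → ℤ) :
    backDiag v * circulant f = circulant (fun i => f (-i)) * backDiag v := by
  ext r s
  rw [mul_backDiag_apply, backDiag_mul_apply, circulant_apply, circulant_apply]
  congr 1
  ring

end BackDiag

section GParray

variable {v : ℕ} [NeZero v]

theorem backDiag_mul_circulant_mul (f : ZMod v → ℤ) (M : Matrix (ZMod v) (ZMod v) ℤ) :
    backDiag v * (circulant f * M) = circulant (fun i => f (-i)) * (backDiag v * M) := by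
  rw [← Matrix.mul_assoc, backDiag_mul_circulant, Matrix.mul_assoc]

theorem circulant_mul_circulant_mul_comm (f g : ZMod v → ℤ) (M : Matrix (ZMod v) (ZMod v) ℤ) :
    circulant f * (circulant g * M) = circulant g * (circulant f * M) := by
  rw [← Matrix.mul_assoc, circulant_mul_comm, Matrix.mul_assoc]

variable (v) in
def gpBlocks (A B C D : Matrix (ZMod v) (ZMod v) ℤ) :
    Matrix (Fin 4) (Fin 4) (Matrix (ZMod v) (ZMod v) ℤ) :=
  of ![![A, B * backDiag v, C * backDiag v, D * backDiag v],
       ![C * backDiag v, Dᵀ * backDiag v, -A, -(Bᵀ * backDiag v)],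
       ![B * backDiag v, -A, -(Dᵀ * backDiag v), Cᵀ * backDiag v],
       ![D * backDiag v, -(Cᵀ * backDiag v), Bᵀ * backDiag v, -A]]

theorem GParray_eq_comp (A B C D : Matrix (ZMod v) (ZMod v) ℤ) :
    GParray v A B C D = comp (Fin 4) (Fin 4) (ZMod v) (ZMod v) ℤ (gpBlocks v A B C D) :=
  rfl

theorem GParray_mul_transpose (a b c d : ZMod v → ℤ) (n : ℤ) (hA : (circulant a).IsSymm)
    (h : circulant a * (circulant a)ᵀ + circulant b * (circulant b)ᵀ +
      circulant c * (circulant c)ᵀ + circulant d * (circulant d)ᵀ = n • 1) :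
    GParray v (circulant a) (circulant b) (circulant c) (circulant d) *
      (GParray v (circulant a) (circulant b) (circulant c) (circulant d))ᵀ = n • 1 := by
  have ha : (fun i => a (-i)) = a := funext (circulant_isSymm_iff.mp hA)
  simp only [transpose_circulant, ha] at h
  have hblocks : gpBlocks v (circulant a) (circulant b) (circulant c) (circulant d) *
      (gpBlocks v (circulant a) (circulant b) (circulant c) (circulant d))ᵀ.map transpose =
      n • 1 := by
    ext1 i j
    fin_cases i <;> fin_cases j <;>
      simp only [gpBlocks, mul_apply, Fin.sum_univ_four, of_apply, map_apply, transpose_apply,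
        Fin.isValue, Fin.zero_eta, Fin.mk_one, Fin.reduceFinMk, cons_val', cons_val_zero,
        cons_val_one, cons_val, cons_val_fin_one, Matrix.smul_apply, one_apply_eq, one_apply_ne,
        ne_eq, Fin.reduceEq, not_false_eq_true, smul_zero] <;>
      simp only [transpose_mul, transpose_neg, transpose_circulant, backDiag_transpose, neg_neg, ha,
        Matrix.mul_assoc, neg_mul, mul_neg, backDiag_mul_circulant, backDiag_mul_circulant_mul,
        backDiag_mul_backDiag, mul_one, circulant_mul_comm, circulant_mul_circulant_mul_comm] <;>
      -- off-diagonal blocks cancel; diagonal blocks are a rearrangement of the Gram sum `h`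
      first | abel1 | exact Eq.trans (by abel1) h
  rw [GParray_eq_comp, transpose_comp, ← compRingEquiv_apply, ← compRingEquiv_apply, ← map_mul,
    compRingEquiv_apply, hblocks, ← comp_one]
  rfl

theorem GParray_transpose (a b d : ZMod v → ℤ) (hA : (circulant a).IsSymm) :
    (GParray v (circulant a) (circulant b) (circulant b) (circulant d))ᵀ =
      GParray v (circulant a) (circulant b) (circulant b) (circulant d) := by
  have ha : (fun i => a (-i)) = a := funext (circulant_isSymm_iff.mp hA)
  rw [GParray_eq_comp, transpose_comp]
  congr 1
  ext1 i j
  fin_cases i <;> fin_cases j <;>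
    simp only [gpBlocks, of_apply, map_apply, transpose_apply, Fin.isValue, Fin.zero_eta,
      Fin.mk_one, Fin.reduceFinMk, cons_val', cons_val_zero, cons_val_one, cons_val,
      cons_val_fin_one] <;>
    simp only [transpose_mul, transpose_neg, transpose_circulant, backDiag_transpose, neg_neg, ha,
      backDiag_mul_circulant]

end GParray

def IsSignMatrix {m n : Type*} (M : Matrix m n ℤ) : Prop :=
  ∀ i j, M i j = 1 ∨ M i j = -1

section IsSignMatrix

variable {m n : Type*}

theorem IsSignMatrix.neg {M : Matrix m n ℤ} (hM : IsSignMatrix M) : IsSignMatrix (-M) :=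
  fun i j => by rcases hM i j with h | h <;> simp [h]

@[simp]
theorem isSignMatrix_neg {M : Matrix m n ℤ} : IsSignMatrix (-M) ↔ IsSignMatrix M :=
  ⟨fun h => neg_neg M ▸ h.neg, IsSignMatrix.neg⟩

@[simp]
theorem isSignMatrix_transpose {M : Matrix m n ℤ} : IsSignMatrix Mᵀ ↔ IsSignMatrix M :=
  ⟨fun h i j => h j i, fun h i j => h j i⟩

@[simp]
theorem isSignMatrix_mul_backDiag {v : ℕ} [NeZero v] {M : Matrix (ZMod v) (ZMod v) ℤ} :
    IsSignMatrix (M * backDiag v) ↔ IsSignMatrix M := by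
  constructor <;> intro h i j <;> simpa [mul_backDiag_apply] using h i (-1 - j)

theorem IsSignMatrix.GParray {v : ℕ} [NeZero v] {A B C D : Matrix (ZMod v) (ZMod v) ℤ}
    (hA : IsSignMatrix A) (hB : IsSignMatrix B) (hC : IsSignMatrix C) (hD : IsSignMatrix D) :
    IsSignMatrix (GParray v A B C D) := by
  have hblocks : ∀ i j, IsSignMatrix (gpBlocks v A B C D i j) := by
    intro i j
    fin_cases i <;> fin_cases j <;> simp [gpBlocks, *]
  exact fun p q => hblocks p.1 q.1 p.2 q.2

theorem isSignMatrix_circOf {v : ℕ} (X : Finset (ZMod v)) : IsSignMatrix (circOf X) :=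
  fun r s => by by_cases h : s - r ∈ X <;> simp [circOf, h]

end IsSignMatrix

section SupplementaryDifferenceSets

variable {v : ℕ}

def signSeq (X : Finset (ZMod v)) (i : ZMod v) : ℤ := if i ∈ X then -1 else 1

theorem circOf_eq_transpose_circulant (X : Finset (ZMod v)) :
    circOf X = (circulant (signSeq X))ᵀ :=
  rfl

theorem circOf_eq_circulant (X : Finset (ZMod v)) :
    circOf X = circulant fun i => signSeq X (-i) := by
  rw [circOf_eq_transpose_circulant, transpose_circulant]

theorem circOf_isSymm {X : Finset (ZMod v)} (hX : ∀ x, -x ∈ X ↔ x ∈ X) :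
    (circOf X).IsSymm := by
  rw [circOf_eq_transpose_circulant, IsSymm, transpose_transpose, transpose_circulant]
  congr 1
  funext i
  simp only [signSeq, hX]

variable [NeZero v]

theorem circOf_mul_transpose (X : Finset (ZMod v)) :
    circOf X * (circOf X)ᵀ = circulant (periodicAutocorrelation (signSeq X)) := by
  rw [circOf_eq_transpose_circulant, transpose_transpose, transpose_circulant,
    circulant_mul_comm, ← transpose_circulant]
  exact circulant_mul_transpose_circulant _

theorem GParray_circOf_symmetric_hadamard (XA XB XD : Finset (ZMod v)) (n : ℤ)
    (hA : ∀ x, -x ∈ XA ↔ x ∈ XA)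
    (hpaf : periodicAutocorrelation (signSeq XA) + 2 • periodicAutocorrelation (signSeq XB) +
      periodicAutocorrelation (signSeq XD) = Pi.single 0 n) :
    (circOf XA)ᵀ = circOf XA ∧
    circOf XA * (circOf XA)ᵀ + 2 • (circOf XB * (circOf XB)ᵀ) + circOf XD * (circOf XD)ᵀ =
      n • 1 ∧
    IsSignMatrix (GParray v (circOf XA) (circOf XB) (circOf XB) (circOf XD)) ∧
    GParray v (circOf XA) (circOf XB) (circOf XB) (circOf XD) *
      (GParray v (circOf XA) (circOf XB) (circOf XB) (circOf XD))ᵀ = n • 1 ∧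
    (GParray v (circOf XA) (circOf XB) (circOf XB) (circOf XD))ᵀ =
      GParray v (circOf XA) (circOf XB) (circOf XB) (circOf XD) := by
  have hsymm := circOf_isSymm hA
  have hgram : circOf XA * (circOf XA)ᵀ + 2 • (circOf XB * (circOf XB)ᵀ) +
      circOf XD * (circOf XD)ᵀ = n • 1 := by
    rw [circOf_mul_transpose, circOf_mul_transpose, circOf_mul_transpose, ← circulant_smul,
      ← circulant_add, ← circulant_add, hpaf, circulant_single, scalar_apply, smul_one_eq_diagonal]
  have hsign := (isSignMatrix_circOf XA).GParray (isSignMatrix_circOf XB)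
    (isSignMatrix_circOf XB) (isSignMatrix_circOf XD)
  simp only [circOf_eq_circulant] at hsymm hgram hsign ⊢
  refine ⟨hsymm, hgram, hsign, GParray_mul_transpose _ _ _ _ n hsymm ?_,
    GParray_transpose _ _ _ hsymm⟩
  rw [← hgram, two_smul]
  abel

end SupplementaryDifferenceSets

/-- For the subsets `A = {0,4,5,6,7,9,13,16,20,22,23,24,25}`,
`D = {0,1,2,3,5,8,10,13,14,15,18,22,25}`, `B = {0,1,2,5,6,8,11,12,14,16,22}` of
`ℤ/29ℤ`, the associated binary circulant matrix `MA` is symmetric and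
`MA·MAᵀ + MD·MDᵀ + 2·(MB·MBᵀ) = 116·I`; consequently the GP array built from
`(MA, MB, MB, MD)` is a symmetric Hadamard matrix of order `116`. -/
theorem symmetric_hadamard_116_construction :
    (circOf ({0, 4, 5, 6, 7, 9, 13, 16, 20, 22, 23, 24, 25} : Finset (ZMod 29)))ᵀ = circOf ({0, 4, 5, 6, 7, 9, 13, 16, 20, 22, 23, 24, 25} : Finset (ZMod 29)) ∧
    (circOf ({0, 4, 5, 6, 7, 9, 13, 16, 20, 22, 23, 24, 25} : Finset (ZMod 29))) * (circOf ({0, 4, 5, 6, 7, 9, 13, 16, 20, 22, 23, 24, 25} : Finset (ZMod 29)))ᵀ +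
      2 • ((circOf ({0, 1, 2, 5, 6, 8, 11, 12, 14, 16, 22} : Finset (ZMod 29))) * (circOf ({0, 1, 2, 5, 6, 8, 11, 12, 14, 16, 22} : Finset (ZMod 29)))ᵀ) +
      (circOf ({0, 1, 2, 3, 5, 8, 10, 13, 14, 15, 18, 22, 25} : Finset (ZMod 29))) * (circOf ({0, 1, 2, 3, 5, 8, 10, 13, 14, 15, 18, 22, 25} : Finset (ZMod 29)))ᵀ =
      (116 : ℤ) • (1 : Matrix (ZMod 29) (ZMod 29) ℤ) ∧
    (∀ p q, GParray 29 (circOf ({0, 4, 5, 6, 7, 9, 13, 16, 20, 22, 23, 24, 25} : Finset (ZMod 29))) (circOf ({0, 1, 2, 5, 6, 8, 11, 12, 14, 16, 22} : Finset (ZMod 29))) (circOf ({0, 1, 2, 5, 6, 8, 11, 12, 14, 16, 22} : Finset (ZMod 29))) (circOf ({0, 1, 2, 3, 5, 8, 10, 13, 14, 15, 18, 22, 25} : Finset (ZMod 29))) p q = 1 ∨ GParray 29 (circOf ({0, 4, 5, 6, 7, 9, 13, 16, 20, 22, 23, 24, 25} : Finset (ZMod 29))) (circOf ({0, 1, 2,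 5, 6, 8, 11, 12, 14, 16, 22} : Finset (ZMod 29))) (circOf ({0, 1, 2, 5, 6, 8, 11, 12, 14, 16, 22} : Finset (ZMod 29))) (circOf ({0, 1, 2, 3, 5, 8, 10, 13, 14, 15, 18, 22, 25} : Finset (ZMod 29))) p q = -1) ∧
    GParray 29 (circOf ({0, 4, 5, 6, 7, 9, 13, 16, 20, 22, 23, 24, 25} : Finset (ZMod 29))) (circOf ({0, 1, 2, 5, 6, 8, 11, 12, 14, 16, 22} : Finset (ZMod 29))) (circOf ({0, 1, 2, 5, 6, 8, 11, 12, 14, 16, 22} : Finset (ZMod 29))) (circOf ({0, 1, 2, 3, 5, 8, 10, 13, 14, 15, 18, 22, 25} : Finset (ZMod 29))) * (GParray 29 (circOf ({0, 4, 5, 6, 7, 9, 13, 16, 20, 22, 23, 24, 25} : Finset (ZMod 29))) (circOf ({0, 1, 2, 5, 6, 8, 11, 12, 14, 16, 22} : Finset (ZMod 29))) (circOf ({0, 1, 2, 5, 6, 8, 11, 12, 14, 16, 22} : Finset (ZMod 29))) (circOf ({0, 1, 2, 3, 5, 8, 10, 13, 14, 15, 18, 22, 25} : Finset (ZMod 29))))ᵀ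 =
      (116 : ℤ) • (1 : Matrix (Fin 4 × ZMod 29) (Fin 4 × ZMod 29) ℤ) ∧
    (GParray 29 (circOf ({0, 4, 5, 6, 7, 9, 13, 16, 20, 22, 23, 24, 25} : Finset (ZMod 29))) (circOf ({0, 1, 2, 5, 6, 8, 11, 12, 14, 16, 22} : Finset (ZMod 29))) (circOf ({0, 1, 2, 5, 6, 8, 11, 12, 14, 16, 22} : Finset (ZMod 29))) (circOf ({0, 1, 2, 3, 5, 8, 10, 13, 14, 15, 18, 22, 25} : Finset (ZMod 29))))ᵀ = GParray 29 (circOf ({0, 4, 5, 6, 7, 9, 13, 16, 20, 22, 23, 24, 25} : Finset (ZMod 29))) (circOf ({0, 1, 2, 5, 6, 8, 11, 12, 14, 16, 22} : Finset (ZMod 29))) (circOf ({0, 1, 2, 5, 6, 8, 11, 12, 14, 16, 22} : Finset (ZMod 29))) (circOf ({0, 1, 2, 3, 5, 8, 10, 13, 14, 15, 18, 22, 25} : Finset (ZMod 29))) :=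
  GParray_circOf_symmetric_hadamard _ _ _ 116 (by decide) (by decide)
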